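/- Consider the Game of Graph Nim on the graph H₁ (path A–B–C–D with edges AB, BC, CD, plus a disjoint edge EF), with all edge weights positive. If w(BC) > w(EF), then the configuration is a winning position for the first player. -/

import Mathlib

/-!
A position of a graph together with a disjoint edge of weight `d` is the sum of a game and a Nim
heap of size `d`, so it is lost exactly when the Grundy value of the rest is `d`. On the path
`A–B–C–D` every value below `w(BC)` is the Grundy value of a position one move away, because
lowering `BC` first does not lose any of the later moves. So when `w(BC) > w(EF)` the first player
moves on the path to a position of Grundy value `w(EF)`.
-/

namespace GraphNim

variable {V E : Type} [Fintype E]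

/-- A legal move in the Game of Graph Nim: choose a vertex `v` and weakly decrease
the weights of edges incident to `v` (all other edges unchanged), strictly
decreasing the total weight. -/
def Move (inc : V → E → Prop) (w w' : E → ℕ) : Prop :=
  ∃ v : V, (∀ e, w' e ≤ w e) ∧ (∀ e, ¬ inc v e → w' e = w e) ∧
    (∑ e, w' e) < (∑ e, w e)

/-- A configuration is losing for the player to move: every legal move leads to a
non-losing configuration (the all-zero configuration is vacuously losing). -/
def Losing (inc : V → E → Prop) (w : E → ℕ) : Prop :=
  ∀ w', Move inc w w' → ¬ Losing inc w'
termination_by ∑ e, w e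
decreasing_by
  rename_i h
  obtain ⟨v, _, _, h3⟩ := h
  exact h3

/-- A configuration is winning for the player to move: some legal move leads to a
losing configuration. -/
def Winning (inc : V → E → Prop) (w : E → ℕ) : Prop :=
  ∃ w', Move inc w w' ∧ Losing inc w'

end GraphNim

open GraphNim

/-- Endpoints of the edges of the graph `H₁` (path `A–B–C–D` plus a disjoint edge
`EF`): vertices `A = 0, …, F = 5`, edges `AB = 0, BC = 1, CD = 2, EF = 3`. -/
def h1Ends : Fin 4 → Fin 6 × Fin 6
  | 0 => (0, 1)
  | 1 => (1, 2)
  | 2 => (2, 3)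
  | 3 => (4, 5)

def h1Inc (v : Fin 6) (e : Fin 4) : Prop := (h1Ends e).1 = v ∨ (h1Ends e).2 = v

namespace GraphNim

variable {V E : Type} [Fintype E] {inc : V → E → Prop}

theorem Move.sum_lt {w w' : E → ℕ} (h : Move inc w w') : ∑ e, w' e < ∑ e, w e := by
  obtain ⟨_, _, _, hsum⟩ := h
  exact hsum

theorem move_iff {w w' : E → ℕ} :
    Move inc w w' ↔ w' ≤ w ∧ (∃ v, ∀ e, ¬ inc v e → w' e = w e) ∧ ∑ e, w' e < ∑ e, w e := by
  simp only [Move, Pi.le_def]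
  constructor
  · rintro ⟨v, hle, hfix, hsum⟩
    exact ⟨hle, ⟨v, hfix⟩, hsum⟩
  · rintro ⟨hle, ⟨v, hfix⟩, hsum⟩
    exact ⟨v, hle, hfix, hsum⟩

theorem wellFounded_move (inc : V → E → Prop) : WellFounded (fun w' w => Move inc w w') :=
  Subrelation.wf (fun h => h.sum_lt) (measure fun w : E → ℕ => ∑ e, w e).wf

theorem losing_iff_forall_not_losing {w : E → ℕ} :
    Losing inc w ↔ ∀ w', Move inc w w' → ¬ Losing inc w' := by
  rw [Losing]

variable (inc) in
noncomputable def grundy (w : E → ℕ) : ℕ :=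
  sInf {n | ∀ w', (h : Move inc w w') → grundy w' ≠ n}
termination_by ∑ e, w e
decreasing_by exact h.sum_lt

theorem grundy_def (w : E → ℕ) :
    grundy inc w = sInf {n | ∀ w', Move inc w w' → grundy inc w' ≠ n} := by
  rw [grundy]

theorem grundy_le_sum (w : E → ℕ) : grundy inc w ≤ ∑ e, w e := by
  induction w using (wellFounded_move inc).induction with
  | _ w ih =>
    rw [grundy_def]
    refine Nat.sInf_le fun w' hw' => ?_
    have := ih w' hw'
    have := hw'.sum_lt
    omega

theorem grundy_ne_of_move {w w' : E → ℕ} (h : Move inc w w') : grundy inc w' ≠ grundy inc w := by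
  have hmem : grundy inc w ∈ {n | ∀ w', Move inc w w' → grundy inc w' ≠ n} := by
    rw [grundy_def]
    refine Nat.sInf_mem ⟨∑ e, w e, fun w' hw' => ?_⟩
    have := grundy_le_sum (inc := inc) w'
    have := hw'.sum_lt
    omega
  exact hmem w' h

theorem exists_move_grundy_eq_of_lt {w : E → ℕ} {m : ℕ} (hm : m < grundy inc w) :
    ∃ w', Move inc w w' ∧ grundy inc w' = m := by
  rw [grundy_def] at hm
  simpa using Nat.notMem_of_lt_sInf hm

/-- `hmove` says that `incH` is the graph `incG` together with a disjoint extra edge, the last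
one, which behaves as a Nim heap. -/
theorem losing_iff_grundy_init_eq_last {n : ℕ} {W : Type} {incG : V → Fin n → Prop}
    {incH : W → Fin (n + 1) → Prop}
    (hmove : ∀ w w', Move incH w w' ↔
      (Move incG (Fin.init w) (Fin.init w') ∧ w' (Fin.last n) = w (Fin.last n)) ∨
      (Fin.init w' = Fin.init w ∧ w' (Fin.last n) < w (Fin.last n)))
    (w : Fin (n + 1) → ℕ) :
    Losing incH w ↔ grundy incG (Fin.init w) = w (Fin.last n) := by
  induction w using (wellFounded_move incH).induction with
  | _ w ih =>
    rw [losing_iff_forall_not_losing]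
    constructor
    · intro hlos
      rcases lt_trichotomy (grundy incG (Fin.init w)) (w (Fin.last n)) with hlt | heq | hgt
      · have hw' : Move incH w (Fin.snoc (Fin.init w) (grundy incG (Fin.init w))) :=
          (hmove _ _).2 (.inr (by simpa using hlt))
        exact absurd ((ih _ hw').2 (by simp)) (hlos _ hw')
      · exact heq
      · obtain ⟨q, hq, hgq⟩ := exists_move_grundy_eq_of_lt hgt
        have hw' : Move incH w (Fin.snoc q (w (Fin.last n))) :=
          (hmove _ _).2 (.inl (by simpa using hq))
        exact absurd ((ih _ hw').2 (by simpa using hgq)) (hlos _ hw')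
    · intro heq w' hw' hlos'
      have hg := (ih w' hw').1 hlos'
      rcases (hmove w w').1 hw' with ⟨hG, hlast⟩ | ⟨hinit, hlt⟩
      · exact grundy_ne_of_move hG (by rw [hg, heq, hlast])
      · rw [hinit] at hg
        omega

def pathInc {n : ℕ} (v : Fin (n + 1)) (e : Fin n) : Prop := v = e.castSucc ∨ v = e.succ

theorem move_pathInc_iff {p q : Fin 3 → ℕ} :
    Move pathInc p q ↔ q 0 ≤ p 0 ∧ q 1 ≤ p 1 ∧ q 2 ≤ p 2 ∧ (q 0 = p 0 ∨ q 2 = p 2) ∧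
      q 0 + q 1 + q 2 < p 0 + p 1 + p 2 := by
  simp [move_iff, Pi.le_def, Fin.forall_fin_succ, Fin.exists_fin_succ, pathInc, Fin.sum_univ_three]
  omega

theorem move_h1Inc_iff (w w' : Fin 4 → ℕ) :
    Move h1Inc w w' ↔
      (Move pathInc (Fin.init w) (Fin.init w') ∧ w' (Fin.last 3) = w (Fin.last 3)) ∨
      (Fin.init w' = Fin.init w ∧ w' (Fin.last 3) < w (Fin.last 3)) := by
  rw [move_iff, move_pathInc_iff]
  simp [Pi.le_def, Fin.forall_fin_succ, Fin.exists_fin_succ, h1Inc, h1Ends, Fin.sum_univ_four,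
    Fin.init, funext_iff]
  omega

/-- Lower the middle edge to `m`: by induction the resulting position has value at least `m`,
and each of its moves is also a move from `p`. -/
theorem exists_move_pathInc_grundy_eq_of_lt {p : Fin 3 → ℕ} {m : ℕ} (hm : m < p 1) :
    ∃ q, Move pathInc p q ∧ grundy pathInc q = m := by
  induction h : p 1 using Nat.strong_induction_on generalizing p m with
  | _ b ih =>
    subst h
    set r : Fin 3 → ℕ := ![p 0, m, p 2]
    have hpr : Move pathInc p r := by simp only [r, move_pathInc_iff, Matrix.cons_val]; grind
    have hmr : m ≤ grundy pathInc r := by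
      by_contra! hlt
      obtain ⟨q, hq, hgq⟩ := ih m hm (p := r) hlt rfl
      exact grundy_ne_of_move hq hgq
    rcases hmr.eq_or_lt with heq | hlt
    · exact ⟨r, hpr, heq.symm⟩
    · obtain ⟨q, hq, hgq⟩ := exists_move_grundy_eq_of_lt hlt
      refine ⟨q, ?_, hgq⟩
      simp only [r, move_pathInc_iff, Matrix.cons_val] at hq ⊢
      omega

end GraphNim

theorem h1_winning_bc_gt_general (w : Fin 4 → ℕ)
    (h : w 1 > w 3) :
    Winning h1Inc w := by
  obtain ⟨p, hp, hgp⟩ := exists_move_pathInc_grundy_eq_of_lt (p := Fin.init w) h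
  refine ⟨Fin.snoc p (w (Fin.last 3)), (move_h1Inc_iff _ _).2
    (.inl ⟨by rwa [Fin.init_snoc], Fin.snoc_last _ _⟩), ?_⟩
  rw [losing_iff_grundy_init_eq_last move_h1Inc_iff, Fin.init_snoc, Fin.snoc_last]
  exact hgp

/-- On `H₁` with all weights positive, if `w(BC) > w(EF)` then the configuration
is winning for the first player. -/
theorem h1_winning_bc_gt (w : Fin 4 → ℕ) (hpos : ∀ e, 0 < w e)
    (h : w 1 > w 3) :
    Winning h1Inc w :=
  h1_winning_bc_gt_general w h
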